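/- Let y₁, y₂ be words over Σ, # ∉ Σ, y₃ = y₁#y₂. If x ∈ MAW^ℓ(y₃) \ (MAW^ℓ(y₁) ∪ MAW^ℓ(y₂)), then there exist i ≠ j in {1,2} such that x has a prefix belonging to MAW^ℓ(y_i) and a suffix belonging to MAW^ℓ(y_j), and moreover neither of these two words is a factor of the other. -/
import Mathlib


/-- `x` is a minimal absent word (MAW) of `y`: `x` is not a factor of `y`,
but every proper factor of `x` is a factor of `y`. -/
def MAW {α : Type*} (y x : List α) : Prop :=
  ¬ x <:+: y ∧ ∀ f : List α, f <:+: x → f ≠ x → f <:+: y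

/-- MAW of length at most `ℓ`. -/
def MAWle {α : Type*} (ℓ : ℕ) (y x : List α) : Prop :=
  MAW y x ∧ x.length ≤ ℓ

/-- Reduced set: MAWs of `u` (length ≤ ℓ) containing no MAW of `v` (length ≤ ℓ) as a factor. -/
def RMAW {α : Type*} (ℓ : ℕ) (u v x : List α) : Prop :=
  MAWle ℓ u x ∧ ∀ w : List α, MAWle ℓ v w → ¬ w <:+: x

open Classical in
/-- A proper factor of `l` is a factor of `l.dropLast` or of `l.tail`. -/
lemma proper_factor_cases {α : Type*} {f l : List α} (h : f <:+: l) (hne : f ≠ l) :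
    f <:+: l.dropLast ∨ f <:+: l.tail := by
  obtain ⟨a, b, hab⟩ := h
  rcases b with _ | ⟨c, b'⟩
  · -- f is a proper suffix of l
    right
    have hsuf : f <:+ l := ⟨a, by simpa using hab⟩
    have hane : a ≠ [] := by
      rintro rfl; exact hne (by simpa using hab)
    have hlen : f.length ≤ l.tail.length := by
      have : l.length = a.length + f.length := by
        rw [← hab]; simp
      have ha : 1 ≤ a.length := by
        cases a with
        | nil => exact absurd rfl hane
        | cons _ _ => simp
      rw [List.length_tail]; omega
    exact (List.suffix_of_suffix_length_le hsuf (List.tail_suffix l) hlen).isInfix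
  · left
    have : l.dropLast = a ++ (f ++ (c :: b').dropLast) := by
      rw [← hab]
      rw [List.append_assoc] at *
      rw [show f ++ c :: b' = (f ++ [c]) ++ b' from by simp] at *
      cases b' with
      | nil => simp
      | cons d b'' =>
        simp [List.dropLast_append]
    exact ⟨a, (c :: b').dropLast, by rw [this, List.append_assoc]⟩

/-- A hash-free factor of `y₁ ++ hash :: y₂` is a factor of `y₁` or of `y₂`. -/
lemma infix_split {α : Type*} {hash : α} {y₁ y₂ u : List α}
    (h : u <:+: y₁ ++ hash :: y₂) (hu : hash ∉ u) :
    u <:+: y₁ ∨ u <:+: y₂ := by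
  obtain ⟨a, b, hab⟩ := h
  by_cases h1 : a.length + u.length ≤ y₁.length
  · left
    have hpre : a ++ u <+: y₁ ++ hash :: y₂ := ⟨b, by simpa [List.append_assoc] using hab⟩
    have hpre' : a ++ u <+: y₁ :=
      List.prefix_of_prefix_length_le hpre (y₁.prefix_append _) (by simpa using h1)
    exact ((List.suffix_append a u).isInfix).trans hpre'.isInfix
  · by_cases h2 : y₁.length + 1 ≤ a.length
    · right
      have hsuf : u ++ b <:+ y₁ ++ hash :: y₂ := ⟨a, by simpa [List.append_assoc] using hab⟩
      have hy2 : y₂ <:+ y₁ ++ hash :: y₂ :=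
        (List.suffix_cons hash y₂).trans (List.suffix_append y₁ _)
      have hlen : (u ++ b).length ≤ y₂.length := by
        have := congrArg List.length hab
        simp at this
        simp; omega
      have : u ++ b <:+ y₂ := List.suffix_of_suffix_length_le hsuf hy2 hlen
      exact (List.infix_append [] u b).trans this.isInfix
    · exfalso
      push_neg at h1 h2
      have h2' : a.length ≤ y₁.length := by omega
      have hlt : y₁.length < (y₁ ++ hash :: y₂).length := by simp
      have e1 : (y₁ ++ hash :: y₂)[y₁.length] = hash := by
        rw [List.getElem_append_right (le_refl _)]
        simp
      have hlt2 : y₁.length < (a ++ (u ++ b)).length := by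
        rw [List.append_assoc] at hab
        rw [hab]; exact hlt
      have e2 : (a ++ (u ++ b))[y₁.length]'hlt2 = u[y₁.length - a.length]'(by omega) := by
        rw [List.getElem_append_right h2']
        rw [List.getElem_append_left (by omega)]
      have hab' : a ++ (u ++ b) = y₁ ++ hash :: y₂ := by
        rw [← List.append_assoc]; exact hab
      have e3 : u[y₁.length - a.length]'(by omega) = hash := by
        rw [← e2, List.getElem_of_eq hab']
        exact e1
      exact hu (e3 ▸ List.getElem_mem _)

/-- If both `dropLast` and `tail` of `x` are factors of `w`, but `x` isn't,
then `x` is a MAW of `w`. -/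
lemma maw_of_ends {α : Type*} {w x : List α} (h1 : x.dropLast <:+: w)
    (h2 : x.tail <:+: w) (h3 : ¬ x <:+: w) : MAW w x := by
  refine ⟨h3, fun f hf hne => ?_⟩
  rcases proper_factor_cases hf hne with h | h
  · exact h.trans h1
  · exact h.trans h2

open Classical in
/-- Key construction: shortest absent prefix and shortest absent suffix. -/
lemma aux_construct {α : Type*} (ℓ : ℕ) (u v x : List α)
    (hne : x ≠ []) (hlen : x.length ≤ ℓ)
    (h0 : ¬ x <:+: u)
    (h1 : x.dropLast <:+: u) (h2 : ¬ x.dropLast <:+: v)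
    (h3 : x.tail <:+: v) (h4 : ¬ x.tail <:+: u) :
    ∃ p s : List α, p <+: x ∧ MAWle ℓ v p ∧ s <:+ x ∧ MAWle ℓ u s ∧
      ¬ p <:+: s ∧ ¬ s <:+: p := by
  have hxpos : 0 < x.length := List.length_pos_iff.mpr hne
  -- p : shortest prefix of x absent from v
  have hPex : ∃ n, ¬ x.take n <:+: v :=
    ⟨x.length - 1, by rwa [← List.dropLast_eq_take]⟩
  set k := Nat.find hPex with hk
  have hkspec : ¬ x.take k <:+: v := Nat.find_spec hPex
  have hkle : k ≤ x.length - 1 := Nat.find_le (by rwa [← List.dropLast_eq_take])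
  have hk1 : 1 ≤ k := by
    rcases Nat.eq_zero_or_pos k with h | h
    · exfalso; apply hkspec; rw [h]; simp [List.nil_infix]
    · exact h
  set p := x.take k with hp
  have hplen : p.length = k := by
    simp [hp]; omega
  have hppre : p <+: x := List.take_prefix k x
  have hpdrop : p.dropLast <:+: v := by
    have : p.dropLast = x.take (k - 1) := by
      rw [List.dropLast_eq_take, hplen, hp, List.take_take]
      congr 1; omega
    rw [this]
    by_contra hcon
    have h' := Nat.find_le (h := hPex) hcon
    omega
  have hptail : p.tail <:+: v := by
    have : p.tail = x.tail.take (k - 1) := by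
      rw [hp, ← List.drop_one, ← List.drop_one, List.drop_take]
    rw [this]
    exact ((List.take_prefix _ _).isInfix).trans h3
  have hpmaw : MAWle ℓ v p := ⟨maw_of_ends hpdrop hptail hkspec, by rw [hplen]; omega⟩
  -- s : shortest suffix of x absent from u
  have hSex : ∃ n, x.drop n <:+: u := ⟨x.length, by simp [List.nil_infix]⟩
  set m := Nat.find hSex with hm
  have hmspec : x.drop m <:+: u := Nat.find_spec hSex
  have hmle : m ≤ x.length := Nat.find_le (by simp [List.nil_infix])
  have hm2 : 2 ≤ m := by
    by_contra hcon
    push_neg at hcon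
    interval_cases m
    · exact h0 (by simpa using hmspec)
    · exact h4 (by rwa [List.drop_one] at hmspec)
  set s := x.drop (m - 1) with hs
  have hsabs : ¬ s <:+: u := by
    have := Nat.find_min hSex (show m - 1 < m by omega)
    simpa [hs] using this
  have hssuf : s <:+ x := List.drop_suffix _ x
  have hslen : s.length = x.length - (m - 1) := by simp [hs]
  have hsne : s ≠ [] := by
    intro h; apply hsabs; rw [h]; exact List.nil_infix
  have hstail : s.tail <:+: u := by
    have : s.tail = x.drop m := by
      rw [hs, List.tail_drop]; congr 1; omega
    rwa [this]
  have hsdrop : s.dropLast <:+: u := by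
    obtain ⟨a, ha⟩ := hssuf
    have : x.dropLast = a ++ s.dropLast := by
      rw [← ha, List.dropLast_append]
      simp [hsne]
    have : s.dropLast <:+ x.dropLast := ⟨a, this.symm⟩
    exact this.isInfix.trans h1
  have hsmaw : MAWle ℓ u s := by
    refine ⟨maw_of_ends hsdrop hstail hsabs, ?_⟩
    have : s.length ≤ x.length - 1 := by omega
    omega
  -- incomparability
  have hsinv : s <:+: v := by
    have : s <:+ x.tail := by
      rw [← List.drop_one]
      have : (x.drop 1).drop (m - 2) = s := by
        rw [List.drop_drop, hs]; congr 1; omega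
      rw [← this]
      exact List.drop_suffix _ _
    exact this.isInfix.trans h3
  have hpinu : p <:+: u := by
    have : p <+: x.dropLast := by
      apply List.prefix_of_prefix_length_le hppre (List.dropLast_prefix x)
      simp [hplen]; omega
    exact this.isInfix.trans h1
  refine ⟨p, s, hppre, hpmaw, hssuf, hsmaw, fun h => hpmaw.1.1 (h.trans hsinv),
    fun h => hsabs (h.trans hpinu)⟩

theorem case2_prefix_suffix {α : Type*} (S : Set α) (hash : α)
    (hhash : hash ∉ S) (y₁ y₂ : List α)
    (hy₁ : ∀ a ∈ y₁, a ∈ S) (hy₂ : ∀ a ∈ y₂, a ∈ S)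
    (ℓ : ℕ) (x : List α) (hxS : ∀ a ∈ x, a ∈ S)
    (hx : MAWle ℓ (y₁ ++ hash :: y₂) x)
    (h₁ : ¬ MAWle ℓ y₁ x) (h₂ : ¬ MAWle ℓ y₂ x) :
    (∃ p s : List α, p <+: x ∧ MAWle ℓ y₁ p ∧ s <:+ x ∧ MAWle ℓ y₂ s ∧
      ¬ p <:+: s ∧ ¬ s <:+: p) ∨
    (∃ p s : List α, p <+: x ∧ MAWle ℓ y₂ p ∧ s <:+ x ∧ MAWle ℓ y₁ s ∧
      ¬ p <:+: s ∧ ¬ s <:+: p) := by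
  obtain ⟨⟨habs, hmin⟩, hlen⟩ := hx
  have hne : x ≠ [] := by
    rintro rfl; exact habs List.nil_infix
  have hxpos : 0 < x.length := List.length_pos_iff.mpr hne
  have hdlne : x.dropLast ≠ x := by
    intro h
    have := congrArg List.length h
    simp [List.length_dropLast] at this; omega
  have htlne : x.tail ≠ x := by
    intro h
    have := congrArg List.length h
    simp [List.length_tail] at this; omega
  have hdl3 : x.dropLast <:+: y₁ ++ hash :: y₂ :=
    hmin _ (List.dropLast_prefix x).isInfix hdlne
  have htl3 : x.tail <:+: y₁ ++ hash :: y₂ :=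
    hmin _ (List.tail_suffix x).isInfix htlne
  have hhx : hash ∉ x := fun h => hhash (hxS _ h)
  have hhdl : hash ∉ x.dropLast := fun h => hhx ((List.dropLast_prefix x).isInfix.sublist.mem h)
  have hhtl : hash ∉ x.tail := fun h => hhx ((List.tail_suffix x).isInfix.sublist.mem h)
  have hdl12 := infix_split hdl3 hhdl
  have htl12 := infix_split htl3 hhtl
  -- x is absent from both y₁ and y₂
  have habs1 : ¬ x <:+: y₁ := fun h => habs (h.trans (y₁.prefix_append _).isInfix)
  have habs2 : ¬ x <:+: y₂ := fun h =>
    habs (h.trans ((List.suffix_cons hash y₂).trans (List.suffix_append y₁ _)).isInfix)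
  -- can't have both ends in the same yᵢ
  have hnb1 : ¬ (x.dropLast <:+: y₁ ∧ x.tail <:+: y₁) := fun ⟨ha, hb⟩ =>
    h₁ ⟨maw_of_ends ha hb habs1, hlen⟩
  have hnb2 : ¬ (x.dropLast <:+: y₂ ∧ x.tail <:+: y₂) := fun ⟨ha, hb⟩ =>
    h₂ ⟨maw_of_ends ha hb habs2, hlen⟩
  rcases hdl12 with hdl | hdl
  · -- dropLast in y₁, so tail in y₂, dropLast not in y₂, tail not in y₁
    have htl : x.tail <:+: y₂ := by
      rcases htl12 with h | h
      · exact absurd ⟨hdl, h⟩ hnb1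
      · exact h
    have hdl2 : ¬ x.dropLast <:+: y₂ := fun h => hnb2 ⟨h, htl⟩
    have htl1 : ¬ x.tail <:+: y₁ := fun h => hnb1 ⟨hdl, h⟩
    exact Or.inr (aux_construct ℓ y₁ y₂ x hne hlen habs1 hdl hdl2 htl htl1)
  · have htl : x.tail <:+: y₁ := by
      rcases htl12 with h | h
      · exact h
      · exact absurd ⟨hdl, h⟩ hnb2
    have hdl1 : ¬ x.dropLast <:+: y₁ := fun h => hnb1 ⟨h, htl⟩
    have htl2 : ¬ x.tail <:+: y₂ := fun h => hnb2 ⟨hdl, h⟩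
    exact Or.inl (aux_construct ℓ y₂ y₁ x hne hlen habs2 hdl hdl1 htl htl2)
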